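/- arXiv:2006.01132 — 2 statements merged into one kernel-verified Lean document; each statement's English description precedes it below -/
import Mathlib

section
/- For all non-negative integers n and p, the sum of the p-th powers of the first n positive integers satisfies Σ_{k=1}^{n} k^p = Σ_{j=0}^{p} j! · {p+1, j+1} · C(n, j+1), where {p+1, j+1} is the Stirling number of the second kind and C(n, j+1) is the binomial coefficient. -/
/-- Stirling numbers of the second kind: `{n, k}` counts partitions of an
`n`-element set into `k` non-empty blocks. -/
def stirlingSecond : ℕ → ℕ → ℕ
  | 0, 0 => 1
  | 0, _ + 1 => 0
  | _ + 1, 0 => 0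
  | n + 1, k + 1 => (k + 1) * stirlingSecond n (k + 1) + stirlingSecond n k

/-!
Expanding `x ^ q = ∑ₖ {q, k} · x(x-1)⋯(x-k+1)` at `q = p + 1`, `x = m + 1`, every falling
factorial `(m + 1)(m)⋯(m - j + 1)` carries the factor `m + 1`; dividing it out gives
`(m + 1) ^ p = ∑ⱼ j! · {p + 1, j + 1} · C(m, j)`. Summing over `m < n` and applying Pascal's rule
`C(m + 1, j + 1) = C(m, j) + C(m, j + 1)` telescopes the binomials into `C(n, j + 1)`.
-/

open Finset
open scoped Nat

theorem stirlingSecond_eq_nat_stirlingSecond : _root_.stirlingSecond = Nat.stirlingSecond := by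
  funext n k
  induction n generalizing k with
  | zero => cases k <;> rfl
  | succ n ih => cases k <;> simp [_root_.stirlingSecond, Nat.stirlingSecond_succ_succ, ih]

namespace Nat

theorem self_mul_descFactorial (x k : ℕ) :
    x * x.descFactorial k = x.descFactorial (k + 1) + k * x.descFactorial k := by
  rcases le_or_gt k x with hkx | hxk
  · rw [descFactorial_succ, ← add_mul, Nat.sub_add_cancel hkx]
  · simp [descFactorial_eq_zero_iff_lt.mpr hxk]

theorem pow_eq_sum_stirlingSecond_mul_descFactorial (x p : ℕ) :
    x ^ p = ∑ k ∈ range (p + 1), stirlingSecond p k * x.descFactorial k := by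
  induction p with
  | zero => simp
  | succ p ih =>
    set f : ℕ → ℕ := fun k ↦ k * stirlingSecond p k * x.descFactorial k
    -- `f 0 = 0` and `f (p + 1) = 0`, so shifting the index does not change the sum.
    have hf : ∑ k ∈ range (p + 1), f (k + 1) = ∑ k ∈ range (p + 1), f k := by
      have := (sum_range_succ' f (p + 1)).symm.trans (sum_range_succ f (p + 1))
      simpa [f, stirlingSecond_eq_zero_of_lt (lt_succ_self p)] using this
    calc x ^ (p + 1)
        = ∑ k ∈ range (p + 1), stirlingSecond p k * x.descFactorial (k + 1)
            + ∑ k ∈ range (p + 1), f k := by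
          rw [pow_succ', ih, mul_sum, ← sum_add_distrib]
          refine sum_congr rfl fun k _ ↦ ?_
          rw [mul_left_comm, self_mul_descFactorial]
          ring
      _ = ∑ k ∈ range (p + 1 + 1), stirlingSecond (p + 1) k * x.descFactorial k := by
          rw [sum_range_succ' _ (p + 1), stirlingSecond_succ_zero, zero_mul, add_zero, ← hf,
            ← sum_add_distrib]
          refine sum_congr rfl fun k _ ↦ ?_
          rw [stirlingSecond_succ_succ]
          ring

theorem succ_pow_eq_sum_factorial_mul_stirlingSecond_mul_choose (m p : ℕ) :
    (m + 1) ^ p = ∑ j ∈ range (p + 1), j ! * stirlingSecond (p + 1) (j + 1) * m.choose j := by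
  refine Nat.eq_of_mul_eq_mul_left (by omega : 0 < m + 1) ?_
  rw [← pow_succ', pow_eq_sum_stirlingSecond_mul_descFactorial, sum_range_succ', mul_sum]
  simp only [stirlingSecond_succ_zero, zero_mul, add_zero, succ_descFactorial_succ,
    descFactorial_eq_factorial_mul_choose]
  refine sum_congr rfl fun j _ ↦ ?_
  ring

end Nat

theorem sum_powers_eq_sum_stirlingSecond_choose (n p : ℕ) :
    ∑ k ∈ Finset.Icc 1 n, k ^ p =
      ∑ j ∈ Finset.range (p + 1),
        Nat.factorial j * stirlingSecond (p + 1) (j + 1) * Nat.choose n (j + 1) := by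
  rw [stirlingSecond_eq_nat_stirlingSecond]
  induction n with
  | zero => simp
  | succ n ih =>
    rw [sum_Icc_succ_top (by omega), ih,
      Nat.succ_pow_eq_sum_factorial_mul_stirlingSecond_mul_choose, ← sum_add_distrib]
    refine sum_congr rfl fun j _ ↦ ?_
    rw [Nat.choose_succ_succ']
    ring
end

section
/- For all positive integers n and p, the sum of the p-th powers of the first n positive integers satisfies Σ_{k=1}^{n} k^p = Σ_{j=0}^{p} (-1)^{p+j} · j! · {p+1, j+1} · C(n+j+1, j+1), where {p+1, j+1} is the Stirling number of the second kind and C(n+j+1, j+1) is the binomial coefficient. -/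
/-!
Powers expand in rising factorials as `x ^ m = ∑ₖ (-1) ^ (m + k) {m, k} x (x + 1) ⋯ (x + k - 1)`.
For `m = p + 1` every term has the factor `x`; cancelling it and evaluating at `x = k` gives
`k ^ p = ∑ⱼ (-1) ^ (p + j) j! {p + 1, j + 1} C(k + j, j)`. Summing over `k ≤ n` with the
hockey-stick identity `∑_{k ≤ n} C(k + j, j) = C(n + j + 1, j + 1)` gives the formula; the extra
term `k = 0` vanishes because `p > 0`.
-/

open Finset Polynomial

theorem stirlingSecond_eq_nat_stirlingSecond_s2 :
    ∀ n k : ℕ, stirlingSecond n k = Nat.stirlingSecond n k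
  | 0, 0 | 0, _ + 1 | _ + 1, 0 => rfl
  | n + 1, k + 1 => by
    rw [stirlingSecond, Nat.stirlingSecond_succ_succ, stirlingSecond_eq_nat_stirlingSecond_s2 n k,
      stirlingSecond_eq_nat_stirlingSecond_s2 n (k + 1)]

namespace Polynomial

variable (R : Type*) [CommRing R]

theorem X_pow_eq_sum_stirlingSecond_mul_ascPochhammer (m : ℕ) :
    (X : R[X]) ^ m = ∑ k ∈ range (m + 1),
      ((-1) ^ (m + k) * Nat.stirlingSecond m k : R[X]) * ascPochhammer R k := by
  induction m with
  | zero => simp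
  | succ m ih =>
    set s : ℕ → R[X] := fun k ↦ (-1) ^ (m + k) * Nat.stirlingSecond m k
    set f : ℕ → R[X] := fun k ↦ k * s k * ascPochhammer R k
    have hf : ∑ k ∈ range (m + 1), f (k + 1) = ∑ k ∈ range (m + 1), f k := by
      have h0 : f 0 = 0 := by simp [f]
      have htop : f (m + 1) = 0 := by simp [f, s, Nat.stirlingSecond_eq_zero_of_lt]
      rw [← add_zero (∑ k ∈ range (m + 1), f (k + 1)), ← h0, ← sum_range_succ',
        sum_range_succ, htop, add_zero]
    calc (X : R[X]) ^ (m + 1)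
        = ∑ k ∈ range (m + 1), (s k * ascPochhammer R (k + 1) - f k) := by
          rw [pow_succ', ih, mul_sum]
          refine sum_congr rfl fun k _ ↦ ?_
          rw [ascPochhammer_succ_right]
          ring
      _ = ∑ k ∈ range (m + 1), (s k - (k + 1) * s (k + 1)) * ascPochhammer R (k + 1) := by
          rw [sum_sub_distrib, ← hf, ← sum_sub_distrib]
          refine sum_congr rfl fun k _ ↦ ?_
          simp only [f]
          push_cast
          ring
      _ = _ := by
          rw [sum_range_succ' _ (m + 1)]
          simp only [Nat.stirlingSecond_succ_zero, Nat.stirlingSecond_succ_succ, s]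
          push_cast
          simp only [mul_zero, zero_mul, add_zero]
          refine sum_congr rfl fun k _ ↦ ?_
          ring

theorem X_pow_eq_sum_stirlingSecond_succ_mul_ascPochhammer_comp (m : ℕ) :
    (X : R[X]) ^ m = ∑ j ∈ range (m + 1),
      ((-1) ^ (m + j) * Nat.stirlingSecond (m + 1) (j + 1) : R[X]) *
        (ascPochhammer R j).comp (X + 1) := by
  refine isRegular_X.left ?_
  dsimp only
  rw [← pow_succ', X_pow_eq_sum_stirlingSecond_mul_ascPochhammer, sum_range_succ', mul_sum]
  simp only [Nat.stirlingSecond_succ_zero, Nat.cast_zero, mul_zero, zero_mul, add_zero,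
    ascPochhammer_succ_left]
  refine sum_congr rfl fun j _ ↦ ?_
  ring

end Polynomial

theorem pow_eq_sum_stirlingSecond_mul_choose (k p : ℕ) :
    (k : ℤ) ^ p = ∑ j ∈ range (p + 1),
      (-1 : ℤ) ^ (p + j) * j.factorial * Nat.stirlingSecond (p + 1) (j + 1) * (k + j).choose j := by
  have h := congr_arg (eval (k : ℤ)) (X_pow_eq_sum_stirlingSecond_succ_mul_ascPochhammer_comp ℤ p)
  simp only [eval_pow, eval_X, eval_finsetSum, eval_mul, eval_comp, eval_add, eval_one,
    eval_neg, eval_natCast] at h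
  rw [h]
  refine sum_congr rfl fun j _ ↦ ?_
  rw [← Nat.cast_succ, ← ascPochhammer_eval_cast, ascPochhammer_nat_eq_ascFactorial,
    Nat.ascFactorial_eq_factorial_mul_choose]
  push_cast
  ring

theorem sum_powers_eq_alt_sum_stirlingSecond_choose_general (n p : ℕ) (hp : 0 < p) :
    (∑ k ∈ Finset.Icc 1 n, (k : ℤ) ^ p) =
      ∑ j ∈ Finset.range (p + 1),
        (-1 : ℤ) ^ (p + j) * Nat.factorial j * stirlingSecond (p + 1) (j + 1) *
          Nat.choose (n + j + 1) (j + 1) := by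
  have h_range : ∑ k ∈ Icc 1 n, (k : ℤ) ^ p = ∑ k ∈ range (n + 1), (k : ℤ) ^ p := by
    rw [range_eq_Ico, sum_eq_sum_Ico_succ_bot n.succ_pos, zero_add, Nat.succ_eq_add_one,
      Ico_add_one_right_eq_Icc]
    simp [hp.ne']
  rw [h_range]
  simp only [pow_eq_sum_stirlingSecond_mul_choose, stirlingSecond_eq_nat_stirlingSecond_s2]
  rw [sum_comm]
  refine sum_congr rfl fun j _ ↦ ?_
  rw [← Nat.sum_range_add_choose, Nat.cast_sum, mul_sum]

theorem sum_powers_eq_alt_sum_stirlingSecond_choose (n p : ℕ) (hn : 0 < n) (hp : 0 < p) :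
    (∑ k ∈ Finset.Icc 1 n, (k : ℤ) ^ p) =
      ∑ j ∈ Finset.range (p + 1),
        (-1 : ℤ) ^ (p + j) * Nat.factorial j * stirlingSecond (p + 1) (j + 1) *
          Nat.choose (n + j + 1) (j + 1) :=
  sum_powers_eq_alt_sum_stirlingSecond_choose_general n p hp
end
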